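/- Let k ≥ j ≥ 1 be integers. For an integer i ≥ −1, define α_i^k = (−2)^{i+1} · ∏_{l=0}^{i} (2k − l)/(4k − (2l+1)), with the convention that the empty product equals 1 (so α_{−1}^k = 1). Let H_j^k be the (j+1)×(j+1) matrix whose entry in row r and column s (for r,s = 1,…,j+1) is α_{2j+1−r−s}^k; that is, the Hankel-type matrix with first row (α_{2j−1}^k, α_{2j−2}^k, …, α_{j−1}^k) and last row (α_{j−1}^k, …, α₀^k, 1). Then the determinant of H_j^k is strictly positive. -/

import Mathlib

/-!
With `W n = ∫₀^π sin^n`, Wallis' recursion `W (n + 2) = (n + 1) / (n + 2) * W n` gives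
`α_{t-1}^k = (-1)^t W (4k - 2t) / W (4k)`. Hence `H_j^k` is `1 / W (4k)` times the Gram matrix
in `L²(0, π)` of the functions `g_r = sin^{2(k-j)} · (-sin²)^r`, `0 ≤ r ≤ j`. These are linearly
independent, since a nontrivial combination is `sin^{2(k-j)}` times a nonzero polynomial in
`sin²`, so the Gram matrix is positive definite.
-/

open Finset

/-- `hankelAlpha k (i+1) = α_i^k = (−2)^{i+1} ∏_{l=0}^{i} (2k−l)/(4k−(2l+1))`,
indexed so that `hankelAlpha k 0 = α_{−1}^k = 1` (empty product). -/
noncomputable def hankelAlpha (k t : ℕ) : ℝ :=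
  (-2 : ℝ) ^ t * ∏ l ∈ Finset.range t, ((2 * k : ℝ) - l) / ((4 * k : ℝ) - (2 * l + 1))

open Real intervalIntegral Matrix

theorem integral_sin_pow_succ_succ_zero_pi (n : ℕ) :
    ∫ x in 0..π, sin x ^ (n + 2) = (n + 1) / (n + 2) * ∫ x in 0..π, sin x ^ n := by
  simp [integral_sin_pow]

lemma hankelAlpha_succ (k t : ℕ) :
    hankelAlpha k (t + 1) = hankelAlpha k t * (-2 * ((2 * k - t) / (4 * k - (2 * t + 1)))) := by
  simp only [hankelAlpha, prod_range_succ, pow_succ]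
  ring

lemma hankelAlpha_mul_integral_sin_pow {k t n : ℕ} (h : n + 2 * t = 4 * k) :
    hankelAlpha k t * ∫ x in 0..π, sin x ^ (4 * k) = (-1) ^ t * ∫ x in 0..π, sin x ^ n := by
  induction t generalizing n with
  | zero => simp [hankelAlpha, ← h]
  | succ t ih =>
    have h4k : (4 * k : ℝ) = n + 2 * t + 2 := by
      exact_mod_cast (by omega : 4 * k = n + 2 * t + 2)
    have hnum : (2 * k : ℝ) - t = (n + 2) / 2 := by linarith
    have hden : (4 * k : ℝ) - (2 * t + 1) = n + 1 := by linarith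
    rw [hankelAlpha_succ, mul_right_comm, ih (n := n + 2) (by omega),
      integral_sin_pow_succ_succ_zero_pi, hnum, hden, pow_succ]
    field_simp

section Gram

variable {ι : Type*} [Fintype ι] {a b : ℝ} {f : ι → ℝ → ℝ}

lemma dotProduct_mulVec_intervalIntegral_gram (hab : a ≤ b)
    (hf : ∀ i, ContinuousOn (f i) (Set.Icc a b)) (x : ι → ℝ) :
    star x ⬝ᵥ (of (fun i j => ∫ θ in a..b, f i θ * f j θ) *ᵥ x)
      = ∫ θ in a..b, (∑ i, x i * f i θ) ^ 2 := by
  have hxf : ∀ i, ContinuousOn (fun θ => x i * f i θ) (Set.Icc a b) :=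
    fun i => continuousOn_const.mul (hf i)
  have hint : ∀ i j, IntervalIntegrable (fun θ => x i * f i θ * (x j * f j θ))
      MeasureTheory.volume a b :=
    fun i j => ((hxf i).mul (hxf j)).intervalIntegrable_of_Icc hab
  simp only [sq, sum_mul_sum]
  rw [integral_finsetSum fun i _ => ?_]
  · simp only [dotProduct, mulVec, of_apply, star_trivial, mul_sum]
    refine sum_congr rfl fun i _ => ?_
    rw [integral_finsetSum fun j _ => hint i j]
    refine sum_congr rfl fun j _ => ?_
    rw [← integral_mul_const, ← integral_const_mul]
    congr 1 with θ
    ring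
  · exact (continuousOn_finsetSum _ fun j _ => (hxf i).mul (hxf j)).intervalIntegrable_of_Icc hab

theorem posDef_intervalIntegral_gram (hab : a < b) (hf : ∀ i, ContinuousOn (f i) (Set.Icc a b))
    (hf_indep : ∀ x : ι → ℝ, x ≠ 0 → ∃ θ ∈ Set.Icc a b, ∑ i, x i * f i θ ≠ 0) :
    (of fun i j => ∫ θ in a..b, f i θ * f j θ).PosDef := by
  refine posDef_iff_dotProduct_mulVec.2
    ⟨IsHermitian.ext fun i j => by simp [mul_comm], fun x hx => ?_⟩
  rw [dotProduct_mulVec_intervalIntegral_gram hab.le hf]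
  obtain ⟨c, hc, hxc⟩ := hf_indep x hx
  have hcont : ContinuousOn (fun θ => (∑ i, x i * f i θ) ^ 2) (Set.Icc a b) :=
    (continuousOn_finsetSum _ fun i _ => continuousOn_const.mul (hf i)).pow 2
  simpa using integral_lt_integral_of_continuousOn_of_le_of_exists_lt hab continuousOn_const
    hcont (fun θ _ => sq_nonneg _) ⟨c, hc, pow_two_pos_of_ne_zero hxc⟩

end Gram

theorem Set.Infinite.exists_sum_mul_pow_ne_zero {R : Type*} [CommRing R] [IsDomain R] {s : Set R}
    (hs : s.Infinite) {n : ℕ} {x : Fin n → R} (hx : x ≠ 0) :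
    ∃ u ∈ s, ∑ i, x i * u ^ (i : ℕ) ≠ 0 := by
  by_contra! h
  exact hx <| eq_zero_of_forall_index_sum_mul_pow_eq_zero
    (Subtype.val_injective.comp ((hs.natEmbedding s).injective.comp Fin.val_injective))
    fun i => h _ (hs.natEmbedding s i).2

lemma Real.exists_mem_Ioo_sin_sq_eq {v : ℝ} (hv : v ∈ Set.Ioo 0 1) :
    ∃ θ ∈ Set.Ioo 0 π, sin θ ^ 2 = v := by
  have hsqrt : √v ∈ Set.Ioo 0 1 := ⟨sqrt_pos.2 hv.1, (sqrt_lt' one_pos).2 (by simpa using hv.2)⟩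
  refine ⟨arcsin √v, ⟨arcsin_pos.2 hsqrt.1,
    (arcsin_le_pi_div_two _).trans_lt (by linarith [pi_pos])⟩, ?_⟩
  rw [sin_arcsin (by linarith [hsqrt.1]) hsqrt.2.le, sq_sqrt hv.1.le]

lemma exists_sum_mul_sin_pow_ne_zero (m : ℕ) {n : ℕ} {x : Fin n → ℝ} (hx : x ≠ 0) :
    ∃ θ ∈ Set.Icc 0 π, ∑ i, x i * (sin θ ^ (2 * m) * (-sin θ ^ 2) ^ (i : ℕ)) ≠ 0 := by
  obtain ⟨u, hu, hxu⟩ :=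
    (Set.Ioo_infinite (show (-1 : ℝ) < 0 by norm_num)).exists_sum_mul_pow_ne_zero hx
  obtain ⟨θ, hθ, hsin⟩ :=
    exists_mem_Ioo_sin_sq_eq (v := -u) ⟨by linarith [hu.2], by linarith [hu.1]⟩
  refine ⟨θ, Set.Ioo_subset_Icc_self hθ, ?_⟩
  simp_rw [mul_left_comm (x _), ← mul_sum, hsin, neg_neg]
  exact mul_ne_zero (pow_ne_zero _ (sin_pos_of_pos_of_lt_pi hθ.1 hθ.2).ne') hxu

theorem hankel_determinant_pos_general
    (k j : ℕ) (hjk : j ≤ k) :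
    0 < Matrix.det
      (Matrix.of fun r s : Fin (j + 1) => hankelAlpha k (2 * j - ((r : ℕ) + (s : ℕ)))) := by
  set g : Fin (j + 1) → ℝ → ℝ := fun r θ => sin θ ^ (2 * (k - j)) * (-sin θ ^ 2) ^ (r : ℕ)
  have hW := integral_sin_pow_pos (4 * k)
  have hgram : (of fun r s : Fin (j + 1) => hankelAlpha k (2 * j - ((r : ℕ) + (s : ℕ))))
      = (∫ x in 0..π, sin x ^ (4 * k))⁻¹ • of fun r s => ∫ θ in 0..π, g r θ * g s θ := by
    ext r s
    have hrs : (r : ℕ) + s ≤ 2 * j := by omega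
    rw [Matrix.smul_apply, of_apply, of_apply, smul_eq_mul, eq_inv_mul_iff_mul_eq₀ hW.ne',
      mul_comm, hankelAlpha_mul_integral_sin_pow (n := 4 * (k - j) + 2 * (r + s)) (by omega),
      neg_one_pow_congr (m := 2 * j - (r + s)) (n := r + s) (by rw [Nat.even_sub hrs]; simp),
      ← integral_const_mul]
    congr 1 with θ
    ring
  rw [hgram]
  have hg : ∀ r, ContinuousOn (g r) (Set.Icc 0 π) := fun r => by fun_prop
  exact ((posDef_intervalIntegral_gram pi_pos hg fun x hx =>
    exists_sum_mul_sin_pow_ne_zero (k - j) hx).smul (inv_pos.2 hW)).det_pos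

/-- For integers `k ≥ j ≥ 1`, the `(j+1) × (j+1)`
Hankel-type matrix `H_j^k` whose entry in (0-indexed) row `r` and column `s`
is `α_{2j−1−r−s}^k` (with `α_{−1}^k = 1`), i.e. with first row
`(α_{2j−1}^k, …, α_{j−1}^k)` and last row `(α_{j−1}^k, …, α_0^k, 1)`,
has strictly positive determinant. -/
theorem hankel_determinant_pos
    (k j : ℕ) (hj : 1 ≤ j) (hjk : j ≤ k) :
    0 < Matrix.det
      (Matrix.of fun r s : Fin (j + 1) => hankelAlpha k (2 * j - ((r : ℕ) + (s : ℕ)))) :=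
  hankel_determinant_pos_general k j hjk
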